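/- Let f : ℝ → ℝ be odd, convex on (0,∞), non-decreasing, locally Lipschitz with f(0)=0, and let n ≥ 1, p_F = 1+2/n. If ∫_1^∞ s^{-p_F} (f(s)/s) ds < ∞, then ∫_1^∞ s^{-p_F} f'(s) ds < ∞, where f' denotes the (almost everywhere defined) derivative of f. -/

import Mathlib

open Set MeasureTheory

/-- If `f : ℝ → ℝ` is odd, convex on `(0,∞)`, non-decreasing, locally Lipschitz with
`f 0 = 0`, and `∫_1^∞ s^{-p_F} (f(s)/s) ds < ∞`, then `∫_1^∞ s^{-p_F} f'(s) ds < ∞`. -/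
theorem stmt4 (n : ℕ) (hn : 1 ≤ n) (f : ℝ → ℝ)
    (hodd : ∀ u : ℝ, f (-u) = -f u) (hconv : ConvexOn ℝ (Ioi 0) f)
    (hmono : Monotone f) (hlip : LocallyLipschitz f) (hf0 : f 0 = 0)
    (hint : IntegrableOn (fun s : ℝ => s ^ (-(1 + 2 / (n : ℝ))) * (f s / s)) (Ioi 1)) :
    IntegrableOn (fun s : ℝ => s ^ (-(1 + 2 / (n : ℝ))) * deriv f s) (Ioi 1) := by
  set p : ℝ := -(1 + 2 / (n : ℝ)) with hp
  set h : ℝ → ℝ := fun s => s ^ p * (f s / s) with hh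
  -- the dominating function
  set g : ℝ → ℝ := fun s => s ^ p * (f (2 * s) / s) with hg
  have hfnonneg : ∀ s : ℝ, 0 ≤ s → 0 ≤ f s := fun s hs => hf0 ▸ hmono hs
  -- g is integrable on (1, ∞)
  have hg_int : IntegrableOn g (Ioi 1) := by
    have h2 : IntegrableOn (fun x : ℝ => h (2 * x)) (Ioi 1) := by
      rw [integrableOn_Ioi_comp_mul_left_iff h 1 (by norm_num : (0:ℝ) < 2)]
      exact hint.mono_set (Ioi_subset_Ioi (by norm_num))
    have : IntegrableOn (fun x : ℝ => 2 ^ (1 - p) * h (2 * x)) (Ioi 1) :=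
      h2.const_mul _
    apply this.congr_fun _ measurableSet_Ioi
    intro s hs
    have hs0 : (0:ℝ) < s := lt_trans one_pos hs
    have h2s : ((2:ℝ) * s) ^ p = 2 ^ p * s ^ p :=
      Real.mul_rpow (by norm_num) hs0.le
    simp only [hh, hg]
    rw [h2s]
    rw [show (2:ℝ) ^ (1 - p) = 2 ^ (1:ℝ) * 2 ^ (-p) by
      rw [← Real.rpow_add (by norm_num)]; ring_nf]
    have h2p : (2:ℝ) ^ p ≠ 0 := (Real.rpow_pos_of_pos (by norm_num) p).ne'
    rw [Real.rpow_one, Real.rpow_neg (by norm_num)]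
    field_simp
  -- measurability
  have hmeas : AEStronglyMeasurable (fun s : ℝ => s ^ p * deriv f s)
      (volume.restrict (Ioi 1)) := by
    have hc : ContinuousOn (fun s : ℝ => s ^ p) (Ioi 1) :=
      ContinuousOn.rpow_const continuousOn_id
        (fun x hx => Or.inl (ne_of_gt (lt_trans one_pos hx)))
    exact (hc.aestronglyMeasurable measurableSet_Ioi).mul
      (measurable_deriv f).aestronglyMeasurable.restrict
  -- pointwise bound on (1, ∞)
  apply hg_int.mono' hmeas
  rw [ae_restrict_iff' measurableSet_Ioi]
  refine Filter.Eventually.of_forall (fun s hs => ?_)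
  have hs1 : (1:ℝ) < s := hs
  have hs0 : (0:ℝ) < s := lt_trans one_pos hs1
  have hf2s : 0 ≤ f (2 * s) := hfnonneg _ (by linarith)
  have hfs : 0 ≤ f s := hfnonneg _ hs0.le
  have hd_nonneg : 0 ≤ deriv f s := by
    by_cases hdiff : DifferentiableAt ℝ f s
    · have := hconv.slope_le_deriv (Set.mem_Ioi.mpr one_pos) (Set.mem_Ioi.mpr hs0)
        hs1 hdiff
      refine le_trans ?_ this
      rw [slope_def_field]
      have : f 1 ≤ f s := hmono hs1.le
      apply div_nonneg (by linarith) (by linarith)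
    · rw [deriv_zero_of_not_differentiableAt hdiff]
  have hd_le : deriv f s ≤ f (2 * s) / s := by
    by_cases hdiff : DifferentiableAt ℝ f s
    · have h1 := hconv.deriv_le_slope (Set.mem_Ioi.mpr hs0)
        (Set.mem_Ioi.mpr (by linarith : (0:ℝ) < 2 * s)) (by linarith) hdiff
      rw [slope_def_field] at h1
      refine h1.trans ?_
      rw [show (2:ℝ) * s - s = s by ring]
      gcongr
      linarith
    · rw [deriv_zero_of_not_differentiableAt hdiff]
      positivity
  have hsp : (0:ℝ) < s ^ p := Real.rpow_pos_of_pos hs0 p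
  rw [Real.norm_eq_abs, abs_of_nonneg (by positivity)]
  simp only [hg]
  exact mul_le_mul_of_nonneg_left hd_le hsp.le
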